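/- arXiv:1212.0029 — 9 statements merged into one kernel-verified Lean document; each statement's English description precedes it below -/
import Mathlib

section
/- Let A be a 4×4 complex Hermitian matrix such that z* A z ≥ 0 for all z ∈ ℂ⁴ with z₁z₄ + z₂z₃ = 0. Then ∑_{j,k=1}^{4} A_{jk} · A_{5-j,5-k} ≥ 0 (this sum is real). -/
/-!
The quadric `z₀z₃ + z₁z₂ = 0` consists of the vectors `(ac, ad, bc, -bd)`, so the hypothesis says
that the form is nonnegative on these "product vectors". Acting on `(c, d)` by a `2 × 2` matrix `S`
preserves the quadric and multiplies `Q(A) = ∑ A_jk A_{rev j, rev k}` by `|det S|²`; one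
Gram–Schmidt step in the upper left `2 × 2` block lets us assume `A₀₁ = 0`. Then
`Q(A) / 2 = A₀₀A₃₃ + A₁₁A₂₂ + |A₀₃|² + |A₁₂|² + 2 Re(A₀₂ conj A₁₃)`, and the coordinate planes
`{0, 2}` and `{1, 3}` lie in the quadric, so `|A₀₂|² ≤ A₀₀A₂₂` and `|A₁₃|² ≤ A₁₁A₃₃`; AM–GM finishes.
-/

open Complex BigOperators ComplexOrder

open Matrix ComplexConjugate

def quadric : Set (Fin 4 → ℂ) := {z | z 0 * z 3 + z 1 * z 2 = 0}

def revPairing {n : ℕ} (A : Matrix (Fin n) (Fin n) ℂ) : ℂ := ∑ j, ∑ k, A j k * A j.rev k.rev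

theorem Matrix.IsHermitian.conj_revPairing {n : ℕ} {A : Matrix (Fin n) (Fin n) ℂ}
    (hA : A.IsHermitian) : conj (revPairing A) = revPairing A := by
  simp only [revPairing, map_sum, map_mul]
  rw [Finset.sum_comm]
  simp only [← star_def, hA.apply]

def Matrix.NonnegOn {n : Type*} [Fintype n] (A : Matrix n n ℂ) (s : Set (n → ℂ)) : Prop :=
  ∀ z ∈ s, 0 ≤ star z ⬝ᵥ (A *ᵥ z)

theorem Matrix.NonnegOn.conjTranspose_mul_mul {m n : Type*} [Fintype m] [Fintype n]
    {A : Matrix n n ℂ} {s : Set (n → ℂ)} (h : A.NonnegOn s) (B : Matrix n m ℂ)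
    {t : Set (m → ℂ)} (hB : ∀ x ∈ t, B *ᵥ x ∈ s) : (Bᴴ * A * B).NonnegOn t := fun x hx ↦ by
  simpa only [star_mulVec, dotProduct_mulVec, vecMul_vecMul, ← mulVec_mulVec] using h _ (hB x hx)

/-- The substitution `(c, d) ↦ S (c, d)` on the vectors `(ac, ad, bc, -bd)` of `quadric`. -/
def quadricTwist (S : Matrix (Fin 2) (Fin 2) ℂ) : Matrix (Fin 4) (Fin 4) ℂ :=
  !![S 0 0, S 0 1, 0, 0; S 1 0, S 1 1, 0, 0; 0, 0, S 0 0, -S 0 1; 0, 0, -S 1 0, S 1 1]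

theorem quadricTwist_mulVec_mem_quadric (S : Matrix (Fin 2) (Fin 2) ℂ) {z : Fin 4 → ℂ}
    (hz : z ∈ quadric) : quadricTwist S *ᵥ z ∈ quadric := by
  simp only [quadric, Set.mem_ofPred_eq] at hz ⊢
  simp [quadricTwist, mulVec, dotProduct, Fin.sum_univ_four]
  linear_combination (S 0 0 * S 1 1 - S 0 1 * S 1 0) * hz

/-- `revPairing A = tr (A G Aᵀ G)` for the antidiagonal permutation matrix `G`, and
`M G Mᵀ = det S • G` for `M = quadricTwist S`. -/
theorem revPairing_conjTranspose_mul_mul_quadricTwist (S : Matrix (Fin 2) (Fin 2) ℂ)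
    (A : Matrix (Fin 4) (Fin 4) ℂ) :
    revPairing ((quadricTwist S)ᴴ * A * quadricTwist S) = normSq S.det * revPairing A := by
  rw [normSq_eq_conj_mul_self, det_fin_two]
  simp [revPairing, quadricTwist, mul_apply, Fin.sum_univ_four]
  ring

theorem Matrix.PosSemidef.normSq_apply_le {n : Type*} [Fintype n] {P : Matrix n n ℂ}
    (hP : P.PosSemidef) (i j : n) : normSq (P i j) ≤ (P i i).re * (P j j).re := by
  have hdet := (hP.submatrix ![i, j]).det_nonneg
  simp only [det_fin_two, submatrix_apply, cons_val_zero, cons_val_one] at hdet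
  rw [← hP.1.apply j i, ← hP.1.coe_re_apply_self i, ← hP.1.coe_re_apply_self j] at hdet
  simpa [mul_comm (P i j), ← normSq_eq_conj_mul_self] using (le_def.mp hdet).1

theorem Matrix.NonnegOn.posSemidef_submatrix {A : Matrix (Fin 4) (Fin 4) ℂ}
    (h : A.NonnegOn quadric) (hA : A.IsHermitian) {i j : Fin 4}
    (hplane : ∀ u v : ℂ, Pi.single i u + Pi.single j v ∈ quadric) :
    (A.submatrix ![i, j] ![i, j]).PosSemidef := by
  refine .of_dotProduct_mulVec_nonneg (hA.submatrix _) fun x ↦ ?_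
  convert h _ (hplane (x 0) (x 1)) using 1
  simp only [star_add, Pi.star_single, mulVec_add, mulVec_single, dotProduct_add, add_dotProduct,
    single_dotProduct]
  simp [dotProduct, mulVec, Fin.sum_univ_two]
  ring

theorem neg_two_mul_re_mul_conj_le {a b c d : ℝ} (ha : 0 ≤ a) (hb : 0 ≤ b) (hc : 0 ≤ c)
    (hd : 0 ≤ d) {u w : ℂ} (hu : normSq u ≤ a * c) (hw : normSq w ≤ b * d) :
    -(2 * (u * conj w).re) ≤ a * d + b * c := by
  have hre : (u * conj w).re ^ 2 ≤ (a * c) * (b * d) := calc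
    (u * conj w).re ^ 2 ≤ normSq (u * conj w) := by rw [sq]; exact re_sq_le_normSq _
    _ = normSq u * normSq w := by rw [normSq_mul, normSq_conj]
    _ ≤ (a * c) * (b * d) := mul_le_mul hu hw (normSq_nonneg w) (by positivity)
  nlinarith [sq_nonneg (a * d - b * c), mul_nonneg ha hd, mul_nonneg hb hc]

theorem Matrix.IsHermitian.re_revPairing {A : Matrix (Fin 4) (Fin 4) ℂ} (hA : A.IsHermitian) :
    (revPairing A).re = 2 * ((A 0 0).re * (A 3 3).re + (A 1 1).re * (A 2 2).re
      + normSq (A 0 3) + normSq (A 1 2)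
      + 2 * (A 0 1 * conj (A 2 3)).re + 2 * (A 0 2 * conj (A 1 3)).re) := by
  have hconj (i j : Fin 4) : A j i = conj (A i j) := (hA.apply j i).symm
  have hdiag (i : Fin 4) : (A i i).im = 0 := conj_eq_iff_im.mp (hA.apply i i)
  simp [revPairing, Fin.sum_univ_four, hconj 0 1, hconj 0 2, hconj 0 3, hconj 1 2, hconj 1 3,
    hconj 2 3, hdiag, normSq_apply]
  ring

theorem Matrix.NonnegOn.re_revPairing_nonneg_of_apply_zero_one {A : Matrix (Fin 4) (Fin 4) ℂ}
    (h : A.NonnegOn quadric) (hA : A.IsHermitian) (h01 : A 0 1 = 0) :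
    0 ≤ (revPairing A).re := by
  have h02 := h.posSemidef_submatrix hA (i := 0) (j := 2) fun u v ↦ by simp [quadric]
  have h13 := h.posSemidef_submatrix hA (i := 1) (j := 3) fun u v ↦ by simp [quadric]
  have key := neg_two_mul_re_mul_conj_le (le_def.mp (h02.diag_nonneg (i := 0))).1
    (le_def.mp (h13.diag_nonneg (i := 0))).1 (le_def.mp (h02.diag_nonneg (i := 1))).1
    (le_def.mp (h13.diag_nonneg (i := 1))).1 (h02.normSq_apply_le 0 1) (h13.normSq_apply_le 0 1)
  simp only [submatrix_apply, cons_val_zero, cons_val_one] at key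
  rw [hA.re_revPairing, h01, zero_mul, zero_re]
  nlinarith [normSq_nonneg (A 0 3), normSq_nonneg (A 1 2)]

theorem Matrix.NonnegOn.exists_quadricTwist_apply_zero_one_eq_zero
    {A : Matrix (Fin 4) (Fin 4) ℂ} (h : A.NonnegOn quadric) (hA : A.IsHermitian) :
    ∃ S : Matrix (Fin 2) (Fin 2) ℂ, S.det ≠ 0 ∧
      ((quadricTwist S)ᴴ * A * quadricTwist S) 0 1 = 0 := by
  by_cases h00 : A 0 0 = 0
  · have h01 : A 0 1 = 0 := by
      have := (h.posSemidef_submatrix hA (i := 0) (j := 1) fun u v ↦ by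
        simp [quadric]).normSq_apply_le 0 1
      simp only [submatrix_apply, cons_val_zero, cons_val_one, h00, zero_re, zero_mul] at this
      exact normSq_eq_zero.mp (le_antisymm this (normSq_nonneg _))
    refine ⟨1, by simp, ?_⟩
    simp [quadricTwist, mul_apply, Fin.sum_univ_four, h01]
  · refine ⟨!![1, -A 0 1; 0, A 0 0], by simpa [det_fin_two] using h00, ?_⟩
    simp [quadricTwist, mul_apply, Fin.sum_univ_four]
    ring

theorem Matrix.NonnegOn.re_revPairing_nonneg {A : Matrix (Fin 4) (Fin 4) ℂ}
    (h : A.NonnegOn quadric) (hA : A.IsHermitian) : 0 ≤ (revPairing A).re := by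
  obtain ⟨S, hS, h01⟩ := h.exists_quadricTwist_apply_zero_one_eq_zero hA
  have := (h.conjTranspose_mul_mul _ fun _ ↦ quadricTwist_mulVec_mem_quadric S)
    |>.re_revPairing_nonneg_of_apply_zero_one (isHermitian_conjTranspose_mul_mul _ hA) h01
  rw [revPairing_conjTranspose_mul_mul_quadricTwist, re_ofReal_mul] at this
  exact (mul_nonneg_iff_of_pos_left (normSq_pos.mpr hS)).mp this

theorem stmt_1 (A : Matrix (Fin 4) (Fin 4) ℂ) (hA : A.IsHermitian)
    (hpos : ∀ z : Fin 4 → ℂ, z 0 * z 3 + z 1 * z 2 = 0 →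
      0 ≤ ∑ j, ∑ k, (starRingEnd ℂ) (z j) * A j k * z k) :
    0 ≤ ∑ j, ∑ k, A j k * A j.rev k.rev := by
  have h : A.NonnegOn quadric := fun z hz ↦ by
    simpa [dotProduct, mulVec, Finset.mul_sum, mul_assoc] using hpos z hz
  exact le_def.mpr ⟨h.re_revPairing_nonneg hA, (conj_eq_iff_im.mp hA.conj_revPairing).symm⟩
end

section
/- Let A be a 4×4 complex Hermitian matrix as above. Then z* A z ≥ 0 for all z on the quadric {z₁z₄ + z₂z₃ = 0} if and only if: λ_j ≥ 0 for all j; |a| ≤ √(λ₁λ₂), |b| ≤ √(λ₁λ₃), |c| ≤ √(λ₂λ₄), |d| ≤ √(λ₃λ₄); and for every ζ ∈ ℂ, |b − αζ + βζ̄ + c|ζ|²|² ≤ (λ₁ + 2Re(aζ) + λ₂|ζ|²)(λ₃ + 2Re(dζ) + λ₄|ζ|²). -/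
/-!
The quadric `z₁z₄ + z₂z₃ = 0` says that `[[z₁, z₂], [z₃, -z₄]]` has rank at most one, so its points
are `z = (ux, uy, vx, -vy)`. At such a point `z* A z` is the Hermitian form in `(u, v)` of the
`2 × 2` matrix whose diagonal entries are the forms `λ₁|x|² + 2 Re(a x̄ y) + λ₂|y|²`,
`λ₃|x|² + 2 Re(d x̄ y) + λ₄|y|²` and whose off-diagonal entry is
`b|x|² - α x̄ y + β x ȳ + c|y|²`. Positivity on the quadric is therefore the `2 × 2` criterion
(nonnegative diagonal, `|off-diagonal|² ≤` product of the diagonal) for every `(x, y)`; applied to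
the diagonal forms it gives the sign and the `a`, `d` conditions, and by homogeneity in `(x, y)`
the rest reduces to `(x, y) = (1, ζ)` and `(0, 1)`.
-/

open Complex BigOperators ComplexOrder ComplexConjugate

/-- The Hermitian form of `!![P, S; conj S, R]` at `(u, v)`. -/
noncomputable def hermForm₂ (P R : ℝ) (S u v : ℂ) : ℝ :=
  P * ‖u‖ ^ 2 + R * ‖v‖ ^ 2 + 2 * (S * conj u * v).re

theorem hermForm₂_nonneg {P R : ℝ} {S : ℂ} (hP : 0 ≤ P) (hR : 0 ≤ R) (hS : ‖S‖ ^ 2 ≤ P * R)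
    (u v : ℂ) : 0 ≤ hermForm₂ P R S u v := by
  have hcross : -(‖S‖ * ‖u‖ * ‖v‖) ≤ (S * conj u * v).re := by
    have := neg_le_of_abs_le (abs_re_le_norm (S * conj u * v))
    simpa only [norm_mul, norm_conj] using this
  have hS' : ‖S‖ ≤ √P * √R := by
    rw [← Real.sqrt_mul hP]; exact Real.le_sqrt (norm_nonneg S) (mul_nonneg hP hR) |>.mpr hS
  have hamgm : 2 * (√P * √R) * (‖u‖ * ‖v‖) ≤ P * ‖u‖ ^ 2 + R * ‖v‖ ^ 2 := by
    nlinarith [sq_nonneg (√P * ‖u‖ - √R * ‖v‖), Real.sq_sqrt hP, Real.sq_sqrt hR]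
  unfold hermForm₂
  nlinarith [mul_le_mul_of_nonneg_right hS' (mul_nonneg (norm_nonneg u) (norm_nonneg v))]

theorem hermForm₂_nonneg_iff {P R : ℝ} {S : ℂ} :
    (∀ u v, 0 ≤ hermForm₂ P R S u v) ↔ 0 ≤ P ∧ 0 ≤ R ∧ ‖S‖ ^ 2 ≤ P * R := by
  refine ⟨fun h => ?_, fun ⟨hP, hR, hS⟩ => hermForm₂_nonneg hP hR hS⟩
  have hP : 0 ≤ P := by simpa [hermForm₂] using h 1 0
  have hR : 0 ≤ R := by simpa [hermForm₂] using h 0 1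
  -- along `u = t`, `v = -conj S` the form is a real quadratic polynomial in `t`
  have hquad : ∀ t : ℝ, 0 ≤ P * (t * t) + (-2 * ‖S‖ ^ 2) * t + R * ‖S‖ ^ 2 := by
    intro t
    have h' := h t (-conj S)
    have hre : (S * conj (t : ℂ) * -conj S).re = -(‖S‖ ^ 2 * t) := by
      rw [conj_ofReal, mul_comm S, mul_assoc, mul_neg, mul_conj, ← Complex.sq_norm]
      norm_cast; simp [mul_comm]
    simp only [hermForm₂, hre, norm_neg, norm_conj, norm_real, Real.norm_eq_abs, sq_abs] at h'
    linarith
  have hdisc := discrim_le_zero hquad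
  unfold discrim at hdisc
  refine ⟨hP, hR, ?_⟩
  nlinarith [mul_nonneg hP hR, sq_nonneg ‖S‖]

theorem hermForm₂_zero_left (P R : ℝ) (S v : ℂ) : hermForm₂ P R S 0 v = ‖v‖ ^ 2 * R := by
  simp [hermForm₂, mul_comm]

theorem hermForm₂_one_left (P R : ℝ) (S ζ : ℂ) :
    hermForm₂ P R S 1 ζ = P + 2 * (S * ζ).re + R * ‖ζ‖ ^ 2 := by
  simp only [hermForm₂, norm_one, one_pow, mul_one, map_one, mul_re]
  ring

theorem hermForm₂_mul_mul (P R : ℝ) (S t u v : ℂ) :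
    hermForm₂ P R S (t * u) (t * v) = ‖t‖ ^ 2 * hermForm₂ P R S u v := by
  have : S * conj (t * u) * (t * v) = ((‖t‖ ^ 2 : ℝ) : ℂ) * (S * conj u * v) := by
    rw [map_mul, ofReal_pow, ← ofReal_pow, Complex.sq_norm, ← mul_conj]; ring
  simp only [hermForm₂, this, re_ofReal_mul, norm_mul]
  ring

noncomputable def crossCoeff (b c α β x y : ℂ) : ℂ :=
  b * (‖x‖ : ℂ) ^ 2 - α * conj x * y + β * x * conj y + c * (‖y‖ : ℂ) ^ 2

theorem crossCoeff_zero_left (b c α β y : ℂ) : crossCoeff b c α β 0 y = (‖y‖ : ℂ) ^ 2 * c := by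
  simp [crossCoeff, mul_comm]

theorem crossCoeff_one_left (b c α β ζ : ℂ) :
    crossCoeff b c α β 1 ζ = b - α * ζ + β * conj ζ + c * (‖ζ‖ : ℂ) ^ 2 := by
  simp [crossCoeff]

theorem crossCoeff_mul_mul (b c α β t x y : ℂ) :
    crossCoeff b c α β (t * x) (t * y) = (‖t‖ : ℂ) ^ 2 * crossCoeff b c α β x y := by
  simp only [crossCoeff, map_mul, norm_mul, ofReal_mul, mul_pow, ← mul_conj']
  ring

theorem sq_norm_mul_le_of_sq_norm_le {P R : ℝ} {T : ℂ} (t : ℂ) (h : ‖T‖ ^ 2 ≤ P * R) :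
    ‖(‖t‖ : ℂ) ^ 2 * T‖ ^ 2 ≤ (‖t‖ ^ 2 * P) * (‖t‖ ^ 2 * R) := by
  rw [norm_mul, norm_pow, norm_real, Real.norm_eq_abs, abs_norm]
  nlinarith [mul_le_mul_of_nonneg_left h (by positivity : (0:ℝ) ≤ ‖t‖ ^ 2 * ‖t‖ ^ 2)]

theorem exists_eq_rankOne_of_quadric {z : Fin 4 → ℂ} (hz : z 0 * z 3 + z 1 * z 2 = 0) :
    ∃ u v x y : ℂ, z = ![u * x, u * y, v * x, -(v * y)] := by
  by_cases h0 : z 0 = 0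
  · by_cases h1 : z 1 = 0
    · exact ⟨0, 1, z 2, -z 3, by ext i; fin_cases i <;> simp [h0, h1]⟩
    · have h2 : z 2 = 0 := by simpa [h0, h1] using hz
      refine ⟨1, -z 3 / z 1, 0, z 1, ?_⟩
      ext i; fin_cases i <;> simp [h0, h2, h1]
  · refine ⟨1, z 2 / z 0, z 0, z 1, ?_⟩
    ext i; fin_cases i <;> simp [h0]
    field_simp
    linear_combination hz

theorem forall_pencil_iff (l₁ l₂ l₃ l₄ : ℝ) (a b c d α β : ℂ) :
    (∀ x y : ℂ, 0 ≤ hermForm₂ l₁ l₂ a x y ∧ 0 ≤ hermForm₂ l₃ l₄ d x y ∧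
        ‖crossCoeff b c α β x y‖ ^ 2 ≤ hermForm₂ l₁ l₂ a x y * hermForm₂ l₃ l₄ d x y) ↔
      ((0 ≤ l₁ ∧ 0 ≤ l₂ ∧ 0 ≤ l₃ ∧ 0 ≤ l₄) ∧
       (‖a‖ ≤ √(l₁ * l₂) ∧ ‖b‖ ≤ √(l₁ * l₃) ∧ ‖c‖ ≤ √(l₂ * l₄) ∧ ‖d‖ ≤ √(l₃ * l₄)) ∧
       (∀ ζ : ℂ,
          ‖b - α * ζ + β * conj ζ + c * (‖ζ‖ : ℂ) ^ 2‖ ^ 2 ≤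
            (l₁ + 2 * (a * ζ).re + l₂ * ‖ζ‖ ^ 2) * (l₃ + 2 * (d * ζ).re + l₄ * ‖ζ‖ ^ 2))) := by
  constructor
  · intro H
    obtain ⟨h₁, h₂, ha⟩ := hermForm₂_nonneg_iff.1 fun x y => (H x y).1
    obtain ⟨h₃, h₄, hd⟩ := hermForm₂_nonneg_iff.1 fun x y => (H x y).2.1
    have hb : ‖b‖ ^ 2 ≤ l₁ * l₃ := by simpa [hermForm₂, crossCoeff] using (H 1 0).2.2
    have hc : ‖c‖ ^ 2 ≤ l₂ * l₄ := by simpa [hermForm₂, crossCoeff] using (H 0 1).2.2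
    refine ⟨⟨h₁, h₂, h₃, h₄⟩, ⟨Real.le_sqrt_of_sq_le ha, Real.le_sqrt_of_sq_le hb,
      Real.le_sqrt_of_sq_le hc, Real.le_sqrt_of_sq_le hd⟩, fun ζ => ?_⟩
    simpa only [hermForm₂_one_left, crossCoeff_one_left] using (H 1 ζ).2.2
  · rintro ⟨⟨h₁, h₂, h₃, h₄⟩, ⟨ha, -, hc, hd⟩, hζ⟩ x y
    have hsq {p q : ℝ} {w : ℂ} (hp : 0 ≤ p) (hq : 0 ≤ q) (h : ‖w‖ ≤ √(p * q)) :
        ‖w‖ ^ 2 ≤ p * q :=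
      (Real.le_sqrt (norm_nonneg w) (mul_nonneg hp hq)).1 h
    refine ⟨hermForm₂_nonneg h₁ h₂ (hsq h₁ h₂ ha) x y,
      hermForm₂_nonneg h₃ h₄ (hsq h₃ h₄ hd) x y, ?_⟩
    by_cases hx : x = 0
    · subst hx
      rw [hermForm₂_zero_left, hermForm₂_zero_left, crossCoeff_zero_left]
      exact sq_norm_mul_le_of_sq_norm_le y (hsq h₂ h₄ hc)
    · have hy : y = x * (y / x) := by field_simp
      rw [← mul_one x, hy, hermForm₂_mul_mul, hermForm₂_mul_mul, crossCoeff_mul_mul]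
      have := hζ (y / x)
      rw [← hermForm₂_one_left, ← hermForm₂_one_left, ← crossCoeff_one_left] at this
      exact sq_norm_mul_le_of_sq_norm_le x this

theorem sum_conj_mul_mul_rankOne (l₁ l₂ l₃ l₄ : ℝ) (a b c d α β u v x y : ℂ) :
    ∑ j, ∑ k, conj ((![u * x, u * y, v * x, -(v * y)] : Fin 4 → ℂ) j) *
      (!![(l₁ : ℂ), a, b, α;
          conj a, (l₂ : ℂ), β, -c;
          conj b, conj β, (l₃ : ℂ), -d;
          conj α, -conj c, -conj d, (l₄ : ℂ)] : Matrix (Fin 4) (Fin 4) ℂ) j k *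
        (![u * x, u * y, v * x, -(v * y)] : Fin 4 → ℂ) k =
      hermForm₂ (hermForm₂ l₁ l₂ a x y) (hermForm₂ l₃ l₄ d x y) (crossCoeff b c α β x y) u v := by
  simp only [Fin.sum_univ_four, Matrix.of_apply, Matrix.cons_val', Matrix.cons_val_zero,
    Matrix.cons_val_one, Matrix.cons_val_two, Matrix.cons_val_three, Matrix.empty_val',
    Matrix.cons_val_fin_one]
  simp only [crossCoeff, ← ofReal_pow, Complex.sq_norm]
  apply Complex.ext <;>
    simp [hermForm₂, ← normSq_eq_norm_sq, normSq_apply] <;> ring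

theorem stmt_3 (l₁ l₂ l₃ l₄ : ℝ) (a b c d α β : ℂ)
    (A : Matrix (Fin 4) (Fin 4) ℂ)
    (hA : A = !![(l₁ : ℂ), a, b, α;
                 (starRingEnd ℂ) a, (l₂ : ℂ), β, -c;
                 (starRingEnd ℂ) b, (starRingEnd ℂ) β, (l₃ : ℂ), -d;
                 (starRingEnd ℂ) α, -(starRingEnd ℂ) c, -(starRingEnd ℂ) d, (l₄ : ℂ)]) :
    (∀ z : Fin 4 → ℂ, z 0 * z 3 + z 1 * z 2 = 0 →
        0 ≤ ∑ j, ∑ k, (starRingEnd ℂ) (z j) * A j k * z k) ↔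
      ((0 ≤ l₁ ∧ 0 ≤ l₂ ∧ 0 ≤ l₃ ∧ 0 ≤ l₄) ∧
       (‖a‖ ≤ Real.sqrt (l₁ * l₂) ∧
        ‖b‖ ≤ Real.sqrt (l₁ * l₃) ∧
        ‖c‖ ≤ Real.sqrt (l₂ * l₄) ∧
        ‖d‖ ≤ Real.sqrt (l₃ * l₄)) ∧
       (∀ ζ : ℂ,
          ‖b - α * ζ + β * (starRingEnd ℂ) ζ + c * ((‖ζ‖ : ℂ)) ^ 2‖ ^ 2 ≤
            (l₁ + 2 * (a * ζ).re + l₂ * ‖ζ‖ ^ 2) *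
              (l₃ + 2 * (d * ζ).re + l₄ * ‖ζ‖ ^ 2))) := by
  subst hA
  rw [← forall_pencil_iff]
  simp only [← hermForm₂_nonneg_iff]
  constructor
  · intro h x y u v
    have := h ![u * x, u * y, v * x, -(v * y)] (by simp; ring)
    rwa [sum_conj_mul_mul_rankOne, zero_le_real] at this
  · intro h z hz
    obtain ⟨u, v, x, y, rfl⟩ := exists_eq_rankOne_of_quadric hz
    rw [sum_conj_mul_mul_rankOne, zero_le_real]
    exact h x y u v
end

section
/- Let A be a 6×6 complex Hermitian matrix such that z* A z ≥ 0 for all z ∈ ℂ⁶ with z₁z₆ + z₂z₅ + z₃z₄ = 0. Then ∑_{j,k=1}^{6} A_{jk} · A_{7-j,7-k} ≥ 0. -/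
/-!
Let `σ` be the reversal of indices and `J` its permutation matrix, so that the quadric is
`{z | zᵀ J z = 0}` and the sum in question is `tr (A B)` with `B = J Aᵀ J`. The matrix `B` is
Hermitian and, since `z ↦ conj (J z)` preserves the quadric, `B` is nonnegative there as well.
Now `4 tr (A B) = tr ((A + B)²) - tr ((A - B)²)`, and `J (A - B)` is skew-symmetric, so an
eigenvector `v` of `A - B` with eigenvalue `μ ≠ 0` satisfies `μ vᵀ J v = vᵀ J (A - B) v = 0`:
it lies on the quadric. There `v* A v` and `v* B v` are nonnegative with difference `μ`, hence
`|μ| ≤ v* (A + B) v`. Summing squares over an orthonormal eigenbasis of `A - B` gives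
`tr ((A - B)²) = ∑ μ² ≤ ∑ (v* (A + B) v)² ≤ tr ((A + B)²)`.
-/

open Complex BigOperators ComplexOrder

open Matrix Unitary

variable {ι : Type*} [Fintype ι]

theorem dotProduct_mulVec_self_eq_zero_of_transpose_eq_neg {R : Type*} [CommRing R]
    [IsAddTorsionFree R] {M : Matrix ι ι R} (hM : Mᵀ = -M) (v : ι → R) :
    v ⬝ᵥ M *ᵥ v = 0 := by
  refine self_eq_neg.mp ?_
  calc v ⬝ᵥ M *ᵥ v = v ⬝ᵥ Mᵀ *ᵥ v := by
        rw [mulVec_transpose, dotProduct_mulVec, dotProduct_comm]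
    _ = -(v ⬝ᵥ M *ᵥ v) := by rw [hM, neg_mulVec, dotProduct_neg]

theorem sum_mul_apply_perm_eq_trace {R : Type*} [CommSemiring R] (σ : Equiv.Perm ι)
    (A : Matrix ι ι R) : ∑ j, ∑ k, A j k * A (σ j) (σ k) = (A * Aᵀ.submatrix σ σ).trace := by
  simp [trace, mul_apply]

theorem four_mul_trace_mul_eq {R : Type*} [CommRing R] (A B : Matrix ι ι R) :
    4 * (A * B).trace = ((A + B) * (A + B)).trace - ((A - B) * (A - B)).trace := by
  simp only [add_mul, mul_add, sub_mul, mul_sub, trace_add, trace_sub, trace_mul_comm B A]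
  ring

theorem Matrix.IsHermitian.star_trace_mul {R : Type*} [CommSemiring R] [StarRing R]
    {A B : Matrix ι ι R} (hA : A.IsHermitian) (hB : B.IsHermitian) :
    star (A * B).trace = (A * B).trace := by
  rw [← trace_conjTranspose, conjTranspose_mul, hA.eq, hB.eq, trace_mul_comm]

section RCLike

variable {𝕜 : Type*} [RCLike 𝕜]

theorem Matrix.IsHermitian.re_trace_mul_self {C : Matrix ι ι 𝕜} (hC : C.IsHermitian) :
    RCLike.re (C * C).trace = ∑ i, ∑ j, ‖C i j‖ ^ 2 := by
  simp only [trace, diag, mul_apply, map_sum]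
  refine Finset.sum_congr rfl fun i _ => Finset.sum_congr rfl fun j _ => ?_
  rw [← hC.apply j i, RCLike.star_def, RCLike.mul_conj]
  norm_cast

theorem Matrix.IsHermitian.sum_sq_re_diag_le {C : Matrix ι ι 𝕜} (hC : C.IsHermitian) :
    ∑ j, RCLike.re (C j j) ^ 2 ≤ RCLike.re (C * C).trace := by
  rw [hC.re_trace_mul_self]
  calc ∑ j, RCLike.re (C j j) ^ 2 ≤ ∑ j, ‖C j j‖ ^ 2 :=
        Finset.sum_le_sum fun j _ => sq_le_sq.mpr ((RCLike.abs_re_le_norm _).trans (le_abs_self _))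
    _ ≤ ∑ i, ∑ j, ‖C i j‖ ^ 2 := Finset.sum_le_sum fun i _ =>
        Finset.single_le_sum (f := fun j => ‖C i j‖ ^ 2) (fun j _ => by positivity)
          (Finset.mem_univ i)

variable [DecidableEq ι]

theorem Matrix.trace_conjStarAlgAut (u : unitaryGroup ι 𝕜) (X : Matrix ι ι 𝕜) :
    (conjStarAlgAut 𝕜 _ u X).trace = X.trace := by
  rw [conjStarAlgAut_apply, trace_mul_cycle, coe_star_mul_self, one_mul]

theorem Matrix.IsHermitian.trace_mul_self_eq_sum_sq_eigenvalues {N : Matrix ι ι 𝕜}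
    (hN : N.IsHermitian) : (N * N).trace = ((∑ j, hN.eigenvalues j ^ 2 : ℝ) : 𝕜) := by
  conv_lhs => rw [hN.spectral_theorem, ← map_mul, trace_conjStarAlgAut, diagonal_mul_diagonal,
    trace_diagonal]
  simp [sq]

theorem Matrix.IsHermitian.sum_sq_re_conj_diag_le {R : Matrix ι ι 𝕜} (hR : R.IsHermitian)
    (u : unitaryGroup ι 𝕜) :
    ∑ j, RCLike.re (((star u : Matrix ι ι 𝕜) * R * u) j j) ^ 2 ≤ RCLike.re (R * R).trace := by
  have hC : (conjStarAlgAut 𝕜 _ (star u) R).IsHermitian := by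
    rw [IsHermitian, ← star_eq_conjTranspose, ← map_star, star_eq_conjTranspose, hR.eq]
  have := hC.sum_sq_re_diag_le
  rwa [← map_mul, trace_conjStarAlgAut, conjStarAlgAut_star_apply] at this

theorem Matrix.star_col_dotProduct_col_of_mem_unitaryGroup {u : Matrix ι ι 𝕜}
    (hu : u ∈ unitaryGroup ι 𝕜) (j : ι) : star (uᵀ j) ⬝ᵥ uᵀ j = 1 := by
  have := congrFun (congrFun (mem_unitaryGroup_iff'.mp hu) j) j
  rwa [mul_apply', one_apply_eq] at this

end RCLike

section Quadric

variable {σ : Equiv.Perm ι}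

theorem dotProduct_comp_self_eq_zero_of_mulVec_eq_smul
    {N : Matrix ι ι ℂ} (hN : (N.submatrix σ id)ᵀ = -N.submatrix σ id) {v : ι → ℂ} {μ : ℝ}
    (hv : N *ᵥ v = μ • v) (hμ : μ ≠ 0) : v ⬝ᵥ v ∘ σ = 0 := by
  have : (μ : ℂ) * (v ⬝ᵥ v ∘ σ) = 0 := by
    calc (μ : ℂ) * (v ⬝ᵥ v ∘ σ) = v ⬝ᵥ (N *ᵥ v) ∘ σ := by
          rw [hv, ← smul_eq_mul, ← dotProduct_smul]; rfl
      _ = v ⬝ᵥ N.submatrix σ id *ᵥ v := by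
          simpa using congrArg (v ⬝ᵥ ·) (submatrix_mulVec_equiv N v σ (Equiv.refl ι)).symm
      _ = 0 := dotProduct_mulVec_self_eq_zero_of_transpose_eq_neg hN v
  exact (mul_eq_zero.mp this).resolve_left (by exact_mod_cast hμ)

theorem sq_le_sq_re_of_sub_mulVec_eq_smul {A B : Matrix ι ι ℂ}
    (hA : ∀ z, z ⬝ᵥ z ∘ σ = 0 → 0 ≤ star z ⬝ᵥ A *ᵥ z)
    (hB : ∀ z, z ⬝ᵥ z ∘ σ = 0 → 0 ≤ star z ⬝ᵥ B *ᵥ z)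
    (hAB : ((A - B).submatrix σ id)ᵀ = -(A - B).submatrix σ id)
    {v : ι → ℂ} {μ : ℝ} (hv : (A - B) *ᵥ v = μ • v) (hv1 : star v ⬝ᵥ v = 1) :
    μ ^ 2 ≤ (star v ⬝ᵥ (A + B) *ᵥ v).re ^ 2 := by
  rcases eq_or_ne μ 0 with rfl | hμ
  · simpa using sq_nonneg _
  have hq := dotProduct_comp_self_eq_zero_of_mulVec_eq_smul hAB hv hμ
  have ha := (Complex.le_def.mp (hA v hq)).1
  have hb := (Complex.le_def.mp (hB v hq)).1
  have hdiff : star v ⬝ᵥ A *ᵥ v - star v ⬝ᵥ B *ᵥ v = μ := by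
    rw [← dotProduct_sub, ← sub_mulVec, hv, dotProduct_smul, hv1, Complex.real_smul, mul_one]
  have hdiff_re := congrArg Complex.re hdiff
  rw [add_mulVec, dotProduct_add, Complex.add_re]
  simp only [Complex.sub_re, Complex.ofReal_re, Complex.zero_re] at hdiff_re ha hb
  nlinarith

omit [Fintype ι] in
theorem transpose_submatrix_sub_transpose_submatrix {α : Type*} [AddGroup α]
    (hσ : Function.Involutive σ) (A : Matrix ι ι α) :
    ((A - Aᵀ.submatrix σ σ).submatrix σ id)ᵀ = -(A - Aᵀ.submatrix σ σ).submatrix σ id := by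
  ext i j
  simp [hσ i, hσ j]

theorem star_dotProduct_transpose_submatrix_mulVec (hσ : Function.Involutive σ)
    (A : Matrix ι ι ℂ) (z : ι → ℂ) :
    star z ⬝ᵥ Aᵀ.submatrix σ σ *ᵥ z = star (star z ∘ σ) ⬝ᵥ A *ᵥ (star z ∘ σ) := by
  rw [submatrix_mulVec_equiv, ← comp_equiv_symm_dotProduct, hσ.symm_eq_self_of_involutive σ,
    mulVec_transpose, dotProduct_comm, ← dotProduct_mulVec]
  congr 1
  ext i
  simp

theorem star_comp_dotProduct_star_comp (hσ : Function.Involutive σ) (z : ι → ℂ) :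
    (star z ∘ σ) ⬝ᵥ (star z ∘ σ) ∘ σ = star (z ⬝ᵥ z ∘ σ) := by
  have hs := hσ.symm_eq_self_of_involutive σ
  rw [Function.comp_assoc, hσ.comp_self, Function.comp_id, ← hs, comp_equiv_symm_dotProduct, hs]
  simp [dotProduct]

theorem nonneg_transpose_submatrix_of_nonneg (hσ : Function.Involutive σ) {A : Matrix ι ι ℂ}
    (hA : ∀ z, z ⬝ᵥ z ∘ σ = 0 → 0 ≤ star z ⬝ᵥ A *ᵥ z) (z : ι → ℂ) (hz : z ⬝ᵥ z ∘ σ = 0) :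
    0 ≤ star z ⬝ᵥ Aᵀ.submatrix σ σ *ᵥ z := by
  rw [star_dotProduct_transpose_submatrix_mulVec hσ]
  exact hA _ (by rw [star_comp_dotProduct_star_comp hσ, hz, star_zero])

theorem sum_mul_apply_perm_nonneg [DecidableEq ι] (hσ : Function.Involutive σ)
    {A : Matrix ι ι ℂ} (hA : A.IsHermitian)
    (hpos : ∀ z, z ⬝ᵥ z ∘ σ = 0 → 0 ≤ star z ⬝ᵥ A *ᵥ z) :
    0 ≤ ∑ j, ∑ k, A j k * A (σ j) (σ k) := by
  rw [sum_mul_apply_perm_eq_trace]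
  set B := Aᵀ.submatrix σ σ
  have hB : B.IsHermitian := hA.transpose.submatrix σ
  have hN : (A - B).IsHermitian := hA.sub hB
  set U : Matrix ι ι ℂ := ↑hN.eigenvectorUnitary
  have hkey (j : ι) : hN.eigenvalues j ^ 2 ≤ ((star U * (A + B) * U) j j).re ^ 2 := by
    rw [mul_mul_apply]
    exact sq_le_sq_re_of_sub_mulVec_eq_smul hpos (nonneg_transpose_submatrix_of_nonneg hσ hpos)
      (transpose_submatrix_sub_transpose_submatrix hσ A) (hN.mulVec_eigenvectorBasis j)
      (star_col_dotProduct_col_of_mem_unitaryGroup hN.eigenvectorUnitary.2 j)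
  have hsum := (Finset.sum_le_sum fun j _ => hkey j).trans
    ((hA.add hB).sum_sq_re_conj_diag_le hN.eigenvectorUnitary)
  have hfour := congrArg RCLike.re (four_mul_trace_mul_eq A B)
  rw [hN.trace_mul_self_eq_sum_sq_eigenvalues] at hfour
  simp only [RCLike.mul_re, RCLike.ofNat_re, RCLike.ofNat_im, zero_mul, sub_zero, map_sub,
    RCLike.ofReal_re] at hfour
  exact RCLike.nonneg_iff.mpr ⟨by linarith, RCLike.conj_eq_iff_im.mp (hA.star_trace_mul hB)⟩

end Quadric

theorem stmt_5 (A : Matrix (Fin 6) (Fin 6) ℂ) (hA : A.IsHermitian)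
    (hpos : ∀ z : Fin 6 → ℂ, z 0 * z 5 + z 1 * z 4 + z 2 * z 3 = 0 →
      0 ≤ ∑ j, ∑ k, (starRingEnd ℂ) (z j) * A j k * z k) :
    0 ≤ ∑ j, ∑ k, A j k * A j.rev k.rev := by
  have hquadric (z : Fin 6 → ℂ) (hz : z ⬝ᵥ z ∘ Fin.revPerm = 0) :
      z 0 * z 5 + z 1 * z 4 + z 2 * z 3 = 0 := by
    have h : z ⬝ᵥ z ∘ Fin.revPerm = 2 * (z 0 * z 5 + z 1 * z 4 + z 2 * z 3) := by
      simp only [dotProduct, Function.comp_apply, Fin.revPerm_apply, Fin.sum_univ_six, Fin.isValue,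
        Fin.rev_zero, Fin.reduceLast, Fin.reduceRev]
      ring
    simpa [hz] using h
  have hform (z : Fin 6 → ℂ) :
      star z ⬝ᵥ A *ᵥ z = ∑ j, ∑ k, (starRingEnd ℂ) (z j) * A j k * z k := by
    simp [dotProduct, mulVec, Finset.mul_sum, mul_assoc]
  simpa using sum_mul_apply_perm_nonneg Fin.rev_involutive hA
    fun z hz => (hform z).symm ▸ hpos z (hquadric z hz)
end

section
/- Let a ∈ ℂ with |a| ≤ 2 and let A be the 6×6 Hermitian matrix equal to the identity except A₁₆ = a and A₆₁ = ā. Then z* A z ≥ 0 for all z ∈ ℂ⁶ with z₁z₆ + z₂z₅ + z₃z₄ = 0. -/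
open Complex BigOperators ComplexOrder

/-!
The form equals `∑ ‖z k‖² + 2 Re (a z̄₀ z₅)`, and `|2 Re (a z̄₀ z₅)| ≤ 4 ‖z₀‖ ‖z₅‖`.
On the quadric `‖z₀‖ ‖z₅‖ ≤ ‖z₁‖ ‖z₄‖ + ‖z₂‖ ‖z₃‖`, so AM–GM on the three pairs
`(z₀, z₅), (z₁, z₄), (z₂, z₃)` gives `∑ ‖z k‖² ≥ 2 ‖z₀‖ ‖z₅‖ + 2 (‖z₁‖ ‖z₄‖ + ‖z₂‖ ‖z₃‖) ≥ 4 ‖z₀‖ ‖z₅‖`.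
-/

theorem sum_conj_mul_single_mul {n : Type*} [Fintype n] [DecidableEq n] (z : n → ℂ) (i j : n)
    (c : ℂ) :
    ∑ p, ∑ q, (starRingEnd ℂ) (z p) * Matrix.single i j c p q * z q
      = (starRingEnd ℂ) (z i) * c * z j := by
  simp [Matrix.single_apply, ite_and, Finset.sum_ite_eq]

theorem sum_conj_mul_one_mul {n : Type*} [Fintype n] [DecidableEq n] (z : n → ℂ) :
    ∑ p, ∑ q, (starRingEnd ℂ) (z p) * (1 : Matrix n n ℂ) p q * z q = ∑ p, (‖z p‖ ^ 2 : ℝ) := by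
  simp [Matrix.one_apply, Complex.conj_mul']

theorem quadForm_one_add_smul_single_add_conj_smul_single {n : Type*} [Fintype n] [DecidableEq n]
    (a : ℂ) (i j : n) (z : n → ℂ) :
    ∑ p, ∑ q, (starRingEnd ℂ) (z p)
        * (1 + a • Matrix.single i j (1 : ℂ) + (starRingEnd ℂ) a • Matrix.single j i (1 : ℂ)) p q * z q
      = ((∑ p, ‖z p‖ ^ 2 + 2 * (a * (starRingEnd ℂ) (z i) * z j).re : ℝ) : ℂ) := by
  simp only [Matrix.add_apply, mul_add, add_mul, Finset.sum_add_distrib, sum_conj_mul_one_mul,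
    Matrix.smul_single, smul_eq_mul, mul_one, sum_conj_mul_single_mul]
  set w := a * (starRingEnd ℂ) (z i) * z j
  have hw : (starRingEnd ℂ) (z j) * (starRingEnd ℂ) a * z i = (starRingEnd ℂ) w := by
    simp only [w, map_mul, Complex.conj_conj]; ring
  rw [hw, add_assoc, show (starRingEnd ℂ) (z i) * a * z j = w by ring, Complex.add_conj]
  push_cast; ring

theorem four_mul_norm_mul_le_sum_norm_sq_of_quadric {𝕜 : Type*} [NormedField 𝕜] (z : Fin 6 → 𝕜)
    (hz : z 0 * z 5 + z 1 * z 4 + z 2 * z 3 = 0) :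
    4 * (‖z 0‖ * ‖z 5‖) ≤ ∑ k, ‖z k‖ ^ 2 := by
  have hnorm : ‖z 0‖ * ‖z 5‖ ≤ ‖z 1‖ * ‖z 4‖ + ‖z 2‖ * ‖z 3‖ := by
    have h05 : z 0 * z 5 = -(z 1 * z 4 + z 2 * z 3) := by linear_combination hz
    calc ‖z 0‖ * ‖z 5‖ = ‖z 1 * z 4 + z 2 * z 3‖ := by rw [← norm_mul, h05, norm_neg]
      _ ≤ ‖z 1‖ * ‖z 4‖ + ‖z 2‖ * ‖z 3‖ := by
          simpa only [norm_mul] using norm_add_le (z 1 * z 4) (z 2 * z 3)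
  rw [Fin.sum_univ_six]
  nlinarith [two_mul_le_add_sq ‖z 0‖ ‖z 5‖, two_mul_le_add_sq ‖z 1‖ ‖z 4‖,
    two_mul_le_add_sq ‖z 2‖ ‖z 3‖]

theorem stmt_6 (a : ℂ) (ha : ‖a‖ ≤ 2)
    (A : Matrix (Fin 6) (Fin 6) ℂ)
    (hA : A = 1 + a • Matrix.single 0 5 (1 : ℂ)
              + (starRingEnd ℂ) a • Matrix.single 5 0 (1 : ℂ)) :
    ∀ z : Fin 6 → ℂ, z 0 * z 5 + z 1 * z 4 + z 2 * z 3 = 0 →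
      0 ≤ ∑ j, ∑ k, (starRingEnd ℂ) (z j) * A j k * z k := by
  intro z hz
  rw [hA, quadForm_one_add_smul_single_add_conj_smul_single, Complex.zero_le_real]
  have hquadric := four_mul_norm_mul_le_sum_norm_sq_of_quadric z hz
  have hcross : -(‖a‖ * (‖z 0‖ * ‖z 5‖)) ≤ (a * (starRingEnd ℂ) (z 0) * z 5).re := by
    have hre := Complex.abs_re_le_norm (a * (starRingEnd ℂ) (z 0) * z 5)
    rw [norm_mul, norm_mul, Complex.norm_conj] at hre
    linarith [neg_abs_le (a * (starRingEnd ℂ) (z 0) * z 5).re]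
  linarith [mul_le_mul_of_nonneg_right ha (by positivity : 0 ≤ ‖z 0‖ * ‖z 5‖)]
end

section
/- Let a ∈ ℂ with |a| > 2 and let A = I₆ + a·E₁₆ + ā·E₆₁. Then there exists z ∈ ℂ⁶ with z₁z₆ + z₂z₅ + z₃z₄ = 0 and z* A z < 0. -/
/-! Take `z = (1, w, 0, 0, w, -w²)` with `|w| = 1` and `a w² = |a|`. It is isotropic for the
quadric, `∑ |z_j|² = 4`, and the off-diagonal entries contribute `2 Re (a z̄₁ z₆) = -2|a|`, so
`z* A z = 4 - 2|a| < 0`. -/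

open Complex BigOperators ComplexOrder

theorem Matrix.sum_sum_mul_one_add_smul_single_add_smul_single_mul {n R : Type*} [Fintype n]
    [DecidableEq n] [Semiring R] (a b : R) (i j : n) (x y : n → R) :
    ∑ k, ∑ l, x k * (1 + a • Matrix.single i j 1 + b • Matrix.single j i 1 : Matrix n n R) k l
        * y l =
      ∑ k, x k * y k + x i * a * y j + x j * b * y i := by
  simp [Matrix.one_apply, Matrix.single_apply, mul_add, add_mul, Finset.sum_add_distrib,
    ite_and, mul_assoc]

theorem Complex.exists_norm_eq_one_mul_mul_self_eq_norm (a : ℂ) :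
    ∃ w : ℂ, ‖w‖ = 1 ∧ a * (w * w) = ‖a‖ := by
  set w := exp ((-(arg a / 2) : ℝ) * I)
  have hw : exp (arg a * I) * (w * w) = 1 := by
    rw [← exp_add, ← exp_add, ← exp_zero]
    push_cast
    ring_nf
  refine ⟨w, norm_exp_ofReal_mul_I _, ?_⟩
  calc a * (w * w) = ‖a‖ * (exp (arg a * I) * (w * w)) := by
        rw [← mul_assoc (‖a‖ : ℂ), norm_mul_exp_arg_mul_I]
    _ = ‖a‖ := by rw [hw, mul_one]

theorem stmt_7 (a : ℂ) (ha : 2 < ‖a‖)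
    (A : Matrix (Fin 6) (Fin 6) ℂ)
    (hA : A = 1 + a • Matrix.single 0 5 (1 : ℂ)
              + (starRingEnd ℂ) a • Matrix.single 5 0 (1 : ℂ)) :
    ∃ z : Fin 6 → ℂ, z 0 * z 5 + z 1 * z 4 + z 2 * z 3 = 0 ∧
      ∑ j, ∑ k, (starRingEnd ℂ) (z j) * A j k * z k < 0 := by
  obtain ⟨w, hw_norm, haw⟩ := exists_norm_eq_one_mul_mul_self_eq_norm a
  have hww : (starRingEnd ℂ) w * w = 1 := by
    rw [conj_mul', hw_norm]
    simp
  have haw_conj : (starRingEnd ℂ) a * ((starRingEnd ℂ) w * (starRingEnd ℂ) w) = ‖a‖ := by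
    simpa using congrArg (starRingEnd ℂ) haw
  refine ⟨![1, w, 0, 0, w, -(w * w)], by simp, ?_⟩
  have hneg : ((4 - 2 * ‖a‖ : ℝ) : ℂ) < 0 := by exact_mod_cast (by linarith : 4 - 2 * ‖a‖ < 0)
  convert hneg using 1
  rw [hA, Matrix.sum_sum_mul_one_add_smul_single_add_smul_single_mul]
  simp only [Fin.sum_univ_six, Matrix.cons_val, map_neg, map_mul, map_one, map_zero]
  push_cast
  linear_combination (3 + (starRingEnd ℂ) w * w) * hww - haw - haw_conj
end

section
/- For real λ > μ > 0, set a = λ + μ, and let A be the 20×20 real diagonal matrix with A₁₁ = A₂₀,₂₀ = λ, A_kk = μ for k ∈ {2,5,10,11,16,19}, all other diagonal entries 0, modified by setting A₁,₂₀ = A₂₀,₁ = a. Then z* A z ≥ 0 for all z ∈ ℂ²⁰ satisfying z₁z₂₀ − z₁₀z₁₁ + z₅z₁₆ − z₂z₁₉ = 0, yet λ² + 3μ² − a² < 0. -/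
open Complex BigOperators ComplexOrder

/-!
The form equals `l (|z₀|² + |z₁₉|²) + 2a Re(z̄₀ z₁₉) + m S`, where `S` is the sum of the squared
moduli of the six coordinates carrying the weight `m`. The constraint writes `z₀ z₁₉` as a signed sum of
three products of those coordinates, so the triangle inequality and AM-GM give
`2 |z₀| |z₁₉| ≤ S`. Together with `Re(z̄₀ z₁₉) ≥ -|z₀| |z₁₉|` and `|z₀|² + |z₁₉|² ≥ 2 |z₀| |z₁₉|`,
the form is at least `(2l - 2a + 2m) |z₀| |z₁₉| = 0`.
-/

theorem two_mul_norm_sum_mul_le {ι R : Type*} [NonUnitalSeminormedRing R] (s : Finset ι)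
    (u v : ι → R) : 2 * ‖∑ i ∈ s, u i * v i‖ ≤ ∑ i ∈ s, (‖u i‖ ^ 2 + ‖v i‖ ^ 2) :=
  calc 2 * ‖∑ i ∈ s, u i * v i‖ ≤ ∑ i ∈ s, 2 * ‖u i‖ * ‖v i‖ := by
        simp only [mul_assoc, ← Finset.mul_sum]
        gcongr
        exact (norm_sum_le _ _).trans (Finset.sum_le_sum fun i _ => norm_mul_le _ _)
    _ ≤ ∑ i ∈ s, (‖u i‖ ^ 2 + ‖v i‖ ^ 2) :=
        Finset.sum_le_sum fun i _ => two_mul_le_add_sq _ _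

theorem sum_star_mul_mul_of_diag_add_symm {ι : Type*} [Fintype ι] [DecidableEq ι]
    (A : Matrix ι ι ℂ) (d : ι → ℂ) (c : ℂ) {p q : ι} (hpq : p ≠ q) (z : ι → ℂ)
    (hA : A = fun j k =>
      if j = k then d j else if (j = p ∧ k = q) ∨ (j = q ∧ k = p) then c else 0) :
    ∑ j, ∑ k, starRingEnd ℂ (z j) * A j k * z k =
      ∑ j, starRingEnd ℂ (z j) * d j * z j +
        c * (starRingEnd ℂ (z p) * z q + starRingEnd ℂ (z q) * z p) := by
  have hsplit : ∀ j k, A j k = (if j = k then d j else 0) + (if j = p ∧ k = q then c else 0)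
      + (if j = q ∧ k = p then c else 0) := by
    intro j k
    rw [hA]
    dsimp only
    split_ifs <;> simp_all
  simp only [hsplit, mul_add, add_mul, Finset.sum_add_distrib, mul_ite, ite_mul, mul_zero,
    zero_mul, ite_and, Finset.sum_ite_irrel, Finset.sum_ite_eq, Finset.sum_ite_eq', Finset.mem_univ,
    if_true, Finset.sum_const_zero]
  ring

theorem conj_mul_add_conj_mul_eq_two_mul_re (x y : ℂ) :
    starRingEnd ℂ x * y + starRingEnd ℂ y * x = ((2 * (starRingEnd ℂ x * y).re : ℝ) : ℂ) := by
  rw [← add_conj]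
  simp [mul_comm]

theorem nonneg_of_two_mul_norm_mul_le {l m S : ℝ} (hl : 0 ≤ l) (hm : 0 ≤ m) (x y : ℂ)
    (hS : 2 * ‖x * y‖ ≤ S) :
    0 ≤ l * (‖x‖ ^ 2 + ‖y‖ ^ 2) + (l + m) * (2 * (starRingEnd ℂ x * y).re) + m * S := by
  have hre : -(‖x‖ * ‖y‖) ≤ (starRingEnd ℂ x * y).re := by
    have h := neg_le_of_abs_le (abs_re_le_norm (starRingEnd ℂ x * y))
    rwa [norm_mul, norm_conj] at h
  rw [norm_mul] at hS
  nlinarith [two_mul_le_add_sq ‖x‖ ‖y‖, mul_le_mul_of_nonneg_left hS hm,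
    mul_le_mul_of_nonneg_left hre (add_nonneg hl hm)]

theorem stmt_8 (l m : ℝ) (hm : 0 < m) (hlm : m < l) (a : ℝ) (ha : a = l + m)
    (A : Matrix (Fin 20) (Fin 20) ℂ)
    (hA : A = fun j k =>
      if j = k then
        (if j = 0 ∨ j = 19 then (l : ℂ)
         else if j = 1 ∨ j = 4 ∨ j = 9 ∨ j = 10 ∨ j = 15 ∨ j = 18 then (m : ℂ) else 0)
      else if (j = 0 ∧ k = 19) ∨ (j = 19 ∧ k = 0) then (a : ℂ) else 0) :
    (∀ z : Fin 20 → ℂ, z 0 * z 19 - z 9 * z 10 + z 4 * z 15 - z 1 * z 18 = 0 →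
        0 ≤ ∑ j, ∑ k, (starRingEnd ℂ) (z j) * A j k * z k) ∧
      l ^ 2 + 3 * m ^ 2 - a ^ 2 < 0 := by
  subst ha
  refine ⟨fun z hz => ?_, by nlinarith [mul_pos hm (sub_pos.2 hlm)]⟩
  set u : Fin 3 → ℂ := ![z 9, -z 4, z 1]
  set v : Fin 3 → ℂ := ![z 10, z 15, z 18]
  have hS : 2 * ‖z 0 * z 19‖ ≤ ∑ i, (‖u i‖ ^ 2 + ‖v i‖ ^ 2) := by
    have hzuv : z 0 * z 19 = ∑ i, u i * v i := by
      simp only [Fin.sum_univ_three, Matrix.cons_val_zero, Matrix.cons_val_one, Matrix.cons_val,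
        neg_mul, u, v]
      linear_combination hz
    exact hzuv ▸ two_mul_norm_sum_mul_le _ u v
  rw [sum_star_mul_mul_of_diag_add_symm A _ _ (p := 0) (q := 19) (by decide) z hA,
    conj_mul_add_conj_mul_eq_two_mul_re]
  refine (zero_le_real.2 (nonneg_of_two_mul_norm_mul_le (hm.trans hlm).le hm.le _ _ hS)).trans_eq ?_
  simp only [Fin.isValue, mul_re, conj_re, conj_im, neg_mul, sub_neg_eq_add, Fin.sum_univ_succ,
    Matrix.cons_val_zero, Matrix.cons_val_succ, norm_neg, Finset.univ_unique, Fin.default_eq_zero,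
    Matrix.cons_val_fin_one, Finset.sum_const, Finset.card_singleton, smul_add, one_smul,
    ofReal_add, ofReal_mul, ofReal_pow, ofReal_ofNat, mul_ite, mul_zero, ite_mul,
    mul_right_comm _ _ (z _), conj_mul', zero_mul, Fin.reduceEq, or_false, ↓reduceIte,
    Fin.succ_ne_zero, false_or, Fin.succ_zero_eq_one, or_self, Fin.succ_one_eq_two, Fin.reduceSucc,
    or_true, Finset.sum_singleton, zero_add, u, v]
  ring
end

section
/- For any z ∈ ℂ⁶ with z₁z₆ + z₂z₅ + z₃z₄ = 0 and any a ∈ ℂ, one has |z|² + 2Re(a·z̄₁z₆) ≥ 2(2 − |a|)|z₁z₆|. -/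
/-!
On the quadric `z₀z₅ = -(z₁z₄ + z₂z₃)`, so the triangle inequality and AM-GM on the three
pairs give `4‖z₀z₅‖ ≤ 2 ∑ ‖zᵢ‖‖z₅₋ᵢ‖ ≤ ∑ ‖zⱼ‖²`, while `Re (a z̄₀ z₅) ≥ -‖a‖‖z₀z₅‖`.
-/

open Complex BigOperators

theorem norm_le_norm_add_norm_of_add_add_eq_zero {E : Type*} [SeminormedAddCommGroup E]
    {x y w : E} (h : x + y + w = 0) : ‖x‖ ≤ ‖y‖ + ‖w‖ := by
  rw [add_assoc, add_eq_zero_iff_eq_neg] at h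
  rw [h, norm_neg]
  exact norm_add_le y w

theorem two_mul_norm_mul_le_sq_add_sq {R : Type*} [SeminormedRing R] (x y : R) :
    2 * ‖x * y‖ ≤ ‖x‖ ^ 2 + ‖y‖ ^ 2 := by
  nlinarith [norm_mul_le x y, two_mul_le_add_sq ‖x‖ ‖y‖]

theorem four_mul_norm_mul_le_sum_norm_sq {R : Type*} [SeminormedRing R] (z : Fin 6 → R)
    (hz : z 0 * z 5 + z 1 * z 4 + z 2 * z 3 = 0) :
    4 * ‖z 0 * z 5‖ ≤ ∑ j, ‖z j‖ ^ 2 := by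
  have hquadric := norm_le_norm_add_norm_of_add_add_eq_zero hz
  rw [Fin.sum_univ_six]
  linarith [two_mul_norm_mul_le_sq_add_sq (z 0) (z 5), two_mul_norm_mul_le_sq_add_sq (z 1) (z 4),
    two_mul_norm_mul_le_sq_add_sq (z 2) (z 3)]

theorem neg_norm_mul_le_re_mul_conj_mul (a w z : ℂ) :
    -(‖a‖ * ‖w * z‖) ≤ (a * (starRingEnd ℂ) w * z).re := by
  have hnorm : ‖a * (starRingEnd ℂ) w * z‖ = ‖a‖ * ‖w * z‖ := by
    simp only [norm_mul, RCLike.norm_conj, mul_assoc]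
  rw [← hnorm]
  exact (abs_le.mp (abs_re_le_norm _)).1

theorem stmt_9 (z : Fin 6 → ℂ) (hz : z 0 * z 5 + z 1 * z 4 + z 2 * z 3 = 0) (a : ℂ) :
    2 * (2 - ‖a‖) * ‖z 0 * z 5‖ ≤
      ∑ j, ‖z j‖ ^ 2 + 2 * (a * (starRingEnd ℂ) (z 0) * z 5).re := by
  linarith [four_mul_norm_mul_le_sum_norm_sq z hz, neg_norm_mul_le_re_mul_conj_mul a (z 0) (z 5)]
end

section
/- Let λ₁, λ₂, λ₃, λ₄ ≥ 0 and u, D > 0 be reals. Then for every r > 0: (λ₁ + λ₂r²)(λ₃ + λ₄r²) + 4ur² − 2r[λ₁D + λ₃u/D + r²(λ₂D + λ₄u/D)] ≤ (√(λ₁λ₄) + √(λ₂λ₃) − 2√u)²r² + (√(λ₁λ₃) − √(λ₂λ₄)r²)². -/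
/-!
Writing `λᵢ = aᵢ²` and `u = v²`, the right-hand side minus the left-hand side is exactly
`2r` times the sum of the two AM–GM gaps
`a₁² D + (a₄ v r)² / D - 2 a₁ a₄ v r` and `(a₂ r)² D + (a₃ v)² / D - 2 a₂ a₃ v r`.
-/

lemma two_mul_le_sq_mul_add_sq_div {D : ℝ} (hD : 0 < D) (x y : ℝ) :
    2 * (x * y) ≤ x ^ 2 * D + y ^ 2 / D := by
  have h : x ^ 2 * D + y ^ 2 / D - 2 * (x * y) = (x * D - y) ^ 2 / D := by
    field_simp
    ring
  have : 0 ≤ (x * D - y) ^ 2 / D := by positivity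
  linarith

lemma product_bound_of_squares {D r : ℝ} (hD : 0 < D) (hr : 0 ≤ r) (a b c d v : ℝ) :
    (a ^ 2 + b ^ 2 * r ^ 2) * (c ^ 2 + d ^ 2 * r ^ 2) + 4 * v ^ 2 * r ^ 2
        - 2 * r * (a ^ 2 * D + c ^ 2 * v ^ 2 / D + r ^ 2 * (b ^ 2 * D + d ^ 2 * v ^ 2 / D)) ≤
      (a * d + b * c - 2 * v) ^ 2 * r ^ 2 + (a * c - b * d * r ^ 2) ^ 2 := by
  have gap₁ := two_mul_le_sq_mul_add_sq_div hD a (d * v * r)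
  have gap₂ := two_mul_le_sq_mul_add_sq_div hD (b * r) (c * v)
  have identity :
      (a * d + b * c - 2 * v) ^ 2 * r ^ 2 + (a * c - b * d * r ^ 2) ^ 2
        - ((a ^ 2 + b ^ 2 * r ^ 2) * (c ^ 2 + d ^ 2 * r ^ 2) + 4 * v ^ 2 * r ^ 2
          - 2 * r * (a ^ 2 * D + c ^ 2 * v ^ 2 / D + r ^ 2 * (b ^ 2 * D + d ^ 2 * v ^ 2 / D)))
      = 2 * r * ((a ^ 2 * D + (d * v * r) ^ 2 / D - 2 * (a * (d * v * r)))
          + ((b * r) ^ 2 * D + (c * v) ^ 2 / D - 2 * (b * r * (c * v)))) := by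
    ring
  have : 0 ≤ 2 * r * ((a ^ 2 * D + (d * v * r) ^ 2 / D - 2 * (a * (d * v * r)))
      + ((b * r) ^ 2 * D + (c * v) ^ 2 / D - 2 * (b * r * (c * v)))) :=
    mul_nonneg (by positivity) (by linarith)
  linarith

theorem stmt_11 (l₁ l₂ l₃ l₄ u D : ℝ) (h₁ : 0 ≤ l₁) (h₂ : 0 ≤ l₂) (h₃ : 0 ≤ l₃)
    (h₄ : 0 ≤ l₄) (hu : 0 < u) (hD : 0 < D) :
    ∀ r : ℝ, 0 < r →
      (l₁ + l₂ * r ^ 2) * (l₃ + l₄ * r ^ 2) + 4 * u * r ^ 2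
          - 2 * r * (l₁ * D + l₃ * u / D + r ^ 2 * (l₂ * D + l₄ * u / D)) ≤
        (Real.sqrt (l₁ * l₄) + Real.sqrt (l₂ * l₃) - 2 * Real.sqrt u) ^ 2 * r ^ 2
          + (Real.sqrt (l₁ * l₃) - Real.sqrt (l₂ * l₄) * r ^ 2) ^ 2 := by
  intro r hr
  have h := product_bound_of_squares hD hr.le (√l₁) (√l₂) (√l₃) (√l₄) (√u)
  rw [Real.sq_sqrt h₁, Real.sq_sqrt h₂, Real.sq_sqrt h₃, Real.sq_sqrt h₄,
    Real.sq_sqrt hu.le] at h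
  rw [Real.sqrt_mul h₁, Real.sqrt_mul h₂, Real.sqrt_mul h₁, Real.sqrt_mul h₂]
  linarith
end

section
/- For any z ∈ ℂ²⁰ satisfying z₁z₂₀ − z₁₀z₁₁ + z₅z₁₆ − z₂z₁₉ = 0 and any reals λ, μ, a with 0 < a ≤ λ + μ: λ(|z₁|² + |z₂₀|²) + μ(|z₂|² + |z₅|² + |z₁₀|² + |z₁₁|² + |z₁₆|² + |z₁₉|²) + 2a·Re(z̄₁z₂₀) ≥ 0. -/
/-!
Write `p = |z₁ z₂₀|`. The quadric and the triangle inequality give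
`p ≤ |z₁₀||z₁₁| + |z₅||z₁₆| + |z₂||z₁₉|`, so by AM-GM the `λ`-term is at least `2λp` and the
`μ`-term at least `2μp`, while the cross term is at least `-2ap`. The sum is `≥ 2(λ + μ - a)p ≥ 0`.
-/

open Complex

lemma neg_norm_mul_norm_le_re_conj_mul (w u : ℂ) : -(‖w‖ * ‖u‖) ≤ (starRingEnd ℂ w * u).re := by
  have h := Complex.abs_re_le_norm (starRingEnd ℂ w * u)
  rw [norm_mul, Complex.norm_conj] at h
  exact neg_le_of_abs_le h

lemma norm_mul_norm_le_of_mul_eq {α : Type*} [NormedDivisionRing α] {a b c d e f g h : α}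
    (hq : a * b = c * d - e * f + g * h) :
    ‖a‖ * ‖b‖ ≤ ‖c‖ * ‖d‖ + ‖e‖ * ‖f‖ + ‖g‖ * ‖h‖ := by
  calc ‖a‖ * ‖b‖ = ‖c * d - e * f + g * h‖ := by rw [← norm_mul, hq]
    _ ≤ ‖c * d‖ + ‖e * f‖ + ‖g * h‖ := by
      grw [norm_add_le, norm_sub_le]
    _ = ‖c‖ * ‖d‖ + ‖e‖ * ‖f‖ + ‖g‖ * ‖h‖ := by simp only [norm_mul]

lemma nonneg_of_weighted_amgm_bounds {l m a p q r S T : ℝ} (hl : 0 ≤ l) (hm : 0 ≤ m)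
    (ha : 0 ≤ a) (halm : a ≤ l + m) (hp : 0 ≤ p) (hpq : p ≤ q)
    (hS : 2 * p ≤ S) (hT : 2 * q ≤ T) (hr : -p ≤ r) :
    0 ≤ l * S + m * T + 2 * a * r := by
  have hlS : 2 * l * p ≤ l * S := by nlinarith
  have hmT : 2 * m * p ≤ m * T := by nlinarith
  have har : -(2 * a * p) ≤ 2 * a * r := by nlinarith
  nlinarith [mul_nonneg (sub_nonneg.2 halm) hp]

theorem stmt_15 (z : Fin 20 → ℂ)
    (hz : z 0 * z 19 - z 9 * z 10 + z 4 * z 15 - z 1 * z 18 = 0)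
    (l m a : ℝ) (hl : 0 < l) (hm : 0 < m) (ha : 0 < a) (halm : a ≤ l + m) :
    0 ≤ l * (‖z 0‖ ^ 2 + ‖z 19‖ ^ 2)
        + m * (‖z 1‖ ^ 2 + ‖z 4‖ ^ 2 + ‖z 9‖ ^ 2
            + ‖z 10‖ ^ 2 + ‖z 15‖ ^ 2 + ‖z 18‖ ^ 2)
        + 2 * a * ((starRingEnd ℂ) (z 0) * z 19).re := by
  have hpq := norm_mul_norm_le_of_mul_eq
    (show z 0 * z 19 = z 9 * z 10 - z 4 * z 15 + z 1 * z 18 by linear_combination hz)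
  refine nonneg_of_weighted_amgm_bounds hl.le hm.le ha.le halm (by positivity) hpq
    (by rw [← mul_assoc]; exact two_mul_le_add_sq _ _) ?_ (neg_norm_mul_norm_le_re_conj_mul _ _)
  linarith [two_mul_le_add_sq ‖z 9‖ ‖z 10‖, two_mul_le_add_sq ‖z 4‖ ‖z 15‖,
    two_mul_le_add_sq ‖z 1‖ ‖z 18‖]
end
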